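/- arXiv:1103.2045 — 2 statements merged into one kernel-verified Lean document; each statement's English description precedes it below -/
import Mathlib

section
/- Let (M, ∘, e) be an F-manifold with an eventual identity ε and a compatible, torsion-free connection ∇̃. Then for every vector field X: ∇̃_{ε^{-1}∘X}(ε) = − ε ∘ ∇̃_X(ε^{-1}) + ( (1/2)( ∇̃_{ε^{-1}}(ε) + ∇̃_ε(ε^{-1}) ) + ∇̃_e(e) ) ∘ X. -/
/-- An algebraic model of the geometric setting of the paper: `R` plays the role
of the ring `C^∞(M)` of smooth functions on a manifold `M`, and `V` plays the
role of the `C^∞(M)`-module of smooth vector fields on `M`, equipped with its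
Lie bracket and with the action of vector fields on functions by derivations. -/
structure SmoothSetting (R V : Type*) [CommRing R] [LieRing V] [Module R V] where
  /-- the action `X(f)` of a vector field `X` on a function `f` -/
  deriv : V → R → R
  deriv_add : ∀ (X : V) (f g : R), deriv X (f + g) = deriv X f + deriv X g
  deriv_mul : ∀ (X : V) (f g : R), deriv X (f * g) = deriv X f * g + f * deriv X g
  add_deriv : ∀ (X Y : V) (f : R), deriv (X + Y) f = deriv X f + deriv Y f
  smul_deriv : ∀ (f : R) (X : V) (g : R), deriv (f • X) g = f * deriv X g
  bracket_deriv : ∀ (X Y : V) (f : R),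
    deriv ⁅X, Y⁆ f = deriv X (deriv Y f) - deriv Y (deriv X f)
  bracket_smul : ∀ (X : V) (f : R) (Y : V), ⁅X, f • Y⁆ = f • ⁅X, Y⁆ + deriv X f • Y

/-- `(m, e)` is an F-manifold structure: `m` is a fiber-preserving (i.e.
`C^∞(M)`-bilinear) commutative associative multiplication on vector fields with
unit field `e`, satisfying the Hertling–Manin integrability condition
`L_{X∘Y}(∘) = X ∘ L_Y(∘) + Y ∘ L_X(∘)`. -/
structure IsFManifold (R : Type*) {V : Type*} [CommRing R] [LieRing V] [Module R V]
    (m : V → V → V) (e : V) : Prop where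
  add_left : ∀ X Y Z : V, m (X + Y) Z = m X Z + m Y Z
  smul_left : ∀ (f : R) (X Y : V), m (f • X) Y = f • m X Y
  comm : ∀ X Y : V, m X Y = m Y X
  assoc : ∀ X Y Z : V, m (m X Y) Z = m X (m Y Z)
  unit : ∀ X : V, m e X = X
  hertling_manin : ∀ X Y Z W : V,
    ⁅m X Y, m Z W⁆ - m ⁅m X Y, Z⁆ W - m Z ⁅m X Y, W⁆ =
      m X (⁅Y, m Z W⁆ - m ⁅Y, Z⁆ W - m Z ⁅Y, W⁆)
        + m Y (⁅X, m Z W⁆ - m ⁅X, Z⁆ W - m Z ⁅X, W⁆)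

/-- The dual multiplication `X * Y := X ∘ Y ∘ ε⁻¹` determined by an invertible
vector field `ε` with inverse `εinv`. -/
def dualMul {V : Type*} (m : V → V → V) (εinv : V) : V → V → V :=
  fun X Y => m (m X Y) εinv

/-- `ε` (with inverse `εinv`) is an eventual identity on the F-manifold `(m, e)`:
it is invertible and the dual multiplication `X * Y = X ∘ Y ∘ ε⁻¹` defines an
F-manifold structure on `M` with unit field `ε`. -/
def IsEventualIdentity (R : Type*) {V : Type*} [CommRing R] [LieRing V] [Module R V]
    (m : V → V → V) (e ε εinv : V) : Prop :=
  m ε εinv = e ∧ IsFManifold R (dualMul m εinv) ε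

/-- `nabla` is a (Koszul) connection on the tangent bundle, i.e. on vector fields. -/
structure IsConnection {R V : Type*} [CommRing R] [LieRing V] [Module R V]
    (S : SmoothSetting R V) (nabla : V → V → V) : Prop where
  add_left : ∀ X Y Z : V, nabla (X + Y) Z = nabla X Z + nabla Y Z
  smul_left : ∀ (f : R) (X Y : V), nabla (f • X) Y = f • nabla X Y
  add_right : ∀ X Y Z : V, nabla X (Y + Z) = nabla X Y + nabla X Z
  leibniz : ∀ (X : V) (f : R) (Y : V), nabla X (f • Y) = S.deriv X f • Y + f • nabla X Y

/-- `nabla` is torsion-free. -/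
def IsTorsionFree {V : Type*} [LieRing V] (nabla : V → V → V) : Prop :=
  ∀ X Y, nabla X Y - nabla Y X = ⁅X, Y⁆

/-- The covariant derivative `∇_X(∘)(Y, Z)` of a multiplication `m` with respect
to a connection `nabla`. -/
def covMul {V : Type*} [LieRing V] (nabla m : V → V → V) (X Y Z : V) : V :=
  nabla X (m Y Z) - m (nabla X Y) Z - m Y (nabla X Z)

/-- `nabla` is compatible with the multiplication `m`: the vector valued tensor
`∇(∘)` is totally symmetric. -/
def IsCompatible {V : Type*} [LieRing V] (nabla m : V → V → V) : Prop :=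
  ∀ X Y Z, covMul nabla m X Y Z = covMul nabla m Y X Z ∧
    covMul nabla m X Y Z = covMul nabla m X Z Y

/-- The curvature `R^∇_{X,Y}Z = ∇_X∇_Y Z − ∇_Y∇_X Z − ∇_{[X,Y]}Z`. -/
def curv {V : Type*} [LieRing V] (nabla : V → V → V) (X Y Z : V) : V :=
  nabla X (nabla Y Z) - nabla Y (nabla X Z) - nabla ⁅X, Y⁆ Z

/-- `nabla` is flat. -/
def IsFlat {V : Type*} [LieRing V] (nabla : V → V → V) : Prop :=
  ∀ X Y Z, curv nabla X Y Z = 0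

/-- The curvature condition
`V∘R_{Z,Y}X + Y∘R_{V,Z}X + Z∘R_{Y,V}X = 0` of Lorenzoni–Pedroni. -/
def CurvCircCond {V : Type*} [LieRing V] (m nabla : V → V → V) : Prop :=
  ∀ X Y Z W, m W (curv nabla Z Y X) + m Y (curv nabla W Z X)
    + m Z (curv nabla Y W X) = 0

/-- A special family of connections on the F-manifold `(m, e)`: the family of
all `∇̃^V_X(Y) = ∇̃_X(Y) + V∘X∘Y`, `V` a vector field, where `∇̃` is some
torsion-free connection compatible with `m`. -/
def IsSpecialFamily {R V : Type*} [CommRing R] [LieRing V] [Module R V]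
    (S : SmoothSetting R V) (m : V → V → V) (SF : Set (V → V → V)) : Prop :=
  ∃ nt : V → V → V, IsConnection S nt ∧ IsTorsionFree nt ∧ IsCompatible nt m ∧
    SF = { n | ∃ W : V, n = fun X Y => nt X Y + m (m W X) Y }

/-- The connection `∇^W_X(Y) = ε∘∇̃_X(ε⁻¹∘Y) − ∇̃_{ε⁻¹∘Y}(ε)∘X + W*X*Y` on the
dual F-manifold, where `*` is the dual multiplication. -/
def dualConn {V : Type*} [LieRing V] (m : V → V → V) (ε εinv : V)
    (nt : V → V → V) (W : V) : V → V → V :=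
  fun X Y => m ε (nt X (m εinv Y)) - m (nt (m εinv Y) ε) X
    + dualMul m εinv (dualMul m εinv W X) Y

/-- The dual family `D_ε(S̃)` built from a chosen connection `nt ∈ S̃`. -/
def dualFamily {V : Type*} [LieRing V] (m : V → V → V) (ε εinv : V)
    (nt : V → V → V) : Set (V → V → V) :=
  { n | ∃ W : V, n = dualConn m ε εinv nt W }

/-- The dual family `D_ε(S̃)` of a family of connections `S̃`. -/
def dualFamilyOfSet {V : Type*} [LieRing V] (m : V → V → V) (ε εinv : V)
    (SF : Set (V → V → V)) : Set (V → V → V) :=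
  { n | ∃ nt ∈ SF, ∃ W : V, n = dualConn m ε εinv nt W }

/-- The second structure connection
`∇^F_X(Y) = ε∘∇̃_X(ε⁻¹∘Y) − ∇̃_{ε⁻¹∘Y}(ε)∘X` of `(M, ∘, e, ε, ∇̃)`. -/
def secondConn {V : Type*} [LieRing V] (m : V → V → V) (ε εinv : V)
    (nt : V → V → V) : V → V → V :=
  fun X Y => m ε (nt X (m εinv Y)) - m (nt (m εinv Y) ε) X

/-- The connection
`∇_X(Y) = ε∘∇̃_X(ε⁻¹∘Y) − ∇̃_{ε⁻¹∘Y}(ε)∘X + (1/2)[ε⁻¹,ε]∘X∘Y + U*X*Y`. -/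
def uDualConn {V : Type*} [LieRing V] [Module ℚ V] (m : V → V → V)
    (ε εinv U : V) (nt : V → V → V) : V → V → V :=
  fun X Y => secondConn m ε εinv nt X Y + (2 : ℚ)⁻¹ • m (m ⁅εinv, ε⁆ X) Y
    + dualMul m εinv (dualMul m εinv U X) Y

/-- The `k`-th power `X^k` of a vector field with respect to the multiplication
`m` with unit `e`. -/
def mpow {V : Type*} (m : V → V → V) (e X : V) : ℕ → V
  | 0 => e
  | k + 1 => m X (mpow m e X k)

/-- The Legendre transformation `L_u(S̃) = { u⁻¹∘∇̃_X(u∘Y) : ∇̃ ∈ S̃ }` of a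
family of connections `S̃` by an invertible vector field `u` (with inverse
`uinv`). -/
def legFamily {V : Type*} (m : V → V → V) (uinv u : V)
    (SF : Set (V → V → V)) : Set (V → V → V) :=
  { n | ∃ nt ∈ SF, n = fun X Y => m uinv (nt X (m u Y)) }

/-! The unit field `e` of any F-manifold preserves the product (take `X = Y = e` in the
Hertling–Manin condition). Applied to the dual product `X * Y = X ∘ Y ∘ ε⁻¹`, whose unit is `ε`,
this gives `L_ε(∘) = [e, ε] ∘`, and in particular `[ε, ε⁻¹ ∘ X] = ε⁻¹ ∘ [ε, X] + ½ [ε, ε⁻¹] ∘ X`.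
Rewriting the brackets by torsion-freeness, the claim reduces to the total symmetry of `∇̃(∘)`
at `(ε, ε⁻¹, X)` and `(X, ε⁻¹, ε)`, together with `∇̃_X e = ∇̃_e e ∘ X`. -/

/-- The Lie derivative `(L_X ∘)(A, B)` of the multiplication `m`. -/
def lieDerivMul {V : Type*} [LieRing V] (m : V → V → V) (X A B : V) : V :=
  ⁅X, m A B⁆ - m ⁅X, A⁆ B - m A ⁅X, B⁆

namespace IsFManifold

variable {R V : Type*} [CommRing R] [LieRing V] [Module R V] {m : V → V → V} {e : V}

def mulRight (hF : IsFManifold R m e) (B : V) : V →+ V :=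
  AddMonoidHom.mk' (m · B) (hF.add_left · · B)

lemma zero_mul (hF : IsFManifold R m e) (B : V) : m 0 B = 0 :=
  map_zero (hF.mulRight B)

lemma sub_mul (hF : IsFManifold R m e) (A B C : V) : m (A - B) C = m A C - m B C :=
  map_sub (hF.mulRight C) A B

lemma mul_sub (hF : IsFManifold R m e) (A B C : V) : m A (B - C) = m A B - m A C := by
  rw [hF.comm, hF.sub_mul, hF.comm B, hF.comm C]

lemma inv_two_smul_mul [Module ℚ V] (hF : IsFManifold R m e) (A B : V) :
    m ((2 : ℚ)⁻¹ • A) B = (2 : ℚ)⁻¹ • m A B := by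
  exact_mod_cast map_inv_natCast_smul (hF.mulRight B) ℚ ℚ 2 A

lemma mul_unit (hF : IsFManifold R m e) (A : V) : m A e = A := by
  rw [hF.comm, hF.unit]

lemma lieDerivMul_unit (hF : IsFManifold R m e) (A B : V) : lieDerivMul m e A B = 0 := by
  have h := hF.hertling_manin e e A B
  simp only [hF.unit] at h
  exact right_eq_add.mp h

end IsFManifold

namespace IsEventualIdentity

variable {R V : Type*} [CommRing R] [LieRing V] [Module R V] {m : V → V → V} {e ε εinv : V}

lemma inv_mul_self (hF : IsFManifold R m e) (hev : IsEventualIdentity R m e ε εinv) :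
    m εinv ε = e := by
  rw [hF.comm]; exact hev.1

lemma lieDerivMul_eq (hF : IsFManifold R m e) (hev : IsEventualIdentity R m e ε εinv)
    (A B : V) : lieDerivMul m ε A B = - m (m A B) ⁅ε, e⁆ := by
  obtain ⟨-, hFd⟩ := hev
  -- `L_ε(*) = 0`, written through `L_ε(∘)`
  have hdual : ∀ A B : V, lieDerivMul m ε (m A B) εinv + m (lieDerivMul m ε A B) εinv
      + m (m A B) ⁅ε, εinv⁆ = 0 := by
    intro A B
    have h := hFd.lieDerivMul_unit A B
    simp only [lieDerivMul, dualMul, hF.sub_mul] at h ⊢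
    rw [← h]
    abel
  have hmul : m (lieDerivMul m ε A B) εinv = m (lieDerivMul m ε (m A B) e) εinv := by
    have h := hdual (m A B) e
    rw [hF.mul_unit] at h
    linear_combination (norm := abel) hdual A B - h
  have hε : ∀ C : V, m ε (m C εinv) = C := fun C => by rw [← hF.assoc]; exact hFd.unit C
  rw [← hε (lieDerivMul m ε A B), hmul, hε, lieDerivMul, hF.mul_unit, hF.mul_unit]
  abel

lemma lie_inv_mul [Module ℚ V] (hF : IsFManifold R m e) (hev : IsEventualIdentity R m e ε εinv)
    (X : V) : ⁅ε, m εinv X⁆ = m εinv ⁅ε, X⁆ + (2 : ℚ)⁻¹ • m ⁅ε, εinv⁆ X := by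
  have : Std.Associative m := ⟨hF.assoc⟩
  have : Std.Commutative m := ⟨hF.comm⟩
  have hinv := hev.inv_mul_self hF
  have hce : m ⁅ε, εinv⁆ ε = ⁅ε, e⁆ + ⁅ε, e⁆ := by
    have h := hev.lieDerivMul_eq hF εinv ε
    rw [lieDerivMul, hinv, lie_self, hF.comm εinv, hF.zero_mul, hF.unit] at h
    linear_combination (norm := abel) -h
  have htwice : m ⁅ε, εinv⁆ X = m (m εinv X) ⁅ε, e⁆ + m (m εinv X) ⁅ε, e⁆ :=
    calc m ⁅ε, εinv⁆ X = m ⁅ε, εinv⁆ (m (m εinv ε) X) := by rw [hinv, hF.unit]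
      _ = m (m εinv X) (m ⁅ε, εinv⁆ ε) := by ac_rfl
      _ = _ := by rw [hce, hF.comm, hF.add_left, hF.comm]
  have h := hev.lieDerivMul_eq hF εinv X
  rw [lieDerivMul] at h
  linear_combination (norm := module) h + (2 : ℚ)⁻¹ • htwice

end IsEventualIdentity

namespace IsCompatible

variable {V : Type*} [LieRing V] {nabla m : V → V → V}

lemma covMul_swap (hcm : IsCompatible nabla m) (X Y Z : V) :
    covMul nabla m X Y Z = covMul nabla m Z Y X := by
  rw [(hcm X Y Z).1, (hcm Y X Z).2, (hcm Y Z X).1]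

lemma nabla_unit {R : Type*} [CommRing R] [Module R V] {e : V} (hcm : IsCompatible nabla m)
    (hF : IsFManifold R m e) (X : V) : nabla X e = m (nabla e e) X := by
  have h := hcm.covMul_swap X e e
  simp only [covMul, hF.unit, hF.mul_unit] at h
  linear_combination (norm := abel) -h

end IsCompatible

theorem statement3_general {R V : Type*} [CommRing R] [LieRing V] [Module R V] [Module ℚ V]
    (m : V → V → V) (e ε εinv : V)
    (hF : IsFManifold R m e) (hev : IsEventualIdentity R m e ε εinv)
    (nt : V → V → V) (htf : IsTorsionFree nt)
    (hcm : IsCompatible nt m) :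
    ∀ X : V, nt (m εinv X) ε =
      - m ε (nt X εinv) +
        m ((2 : ℚ)⁻¹ • (nt εinv ε + nt ε εinv) + nt e e) X := by
  intro X
  have hcov := hcm.covMul_swap ε εinv X
  rw [covMul, covMul, hev.inv_mul_self hF, hcm.nabla_unit hF, hF.comm (nt X εinv)] at hcov
  have hlie := hev.lie_inv_mul hF X
  rw [← htf, ← htf, ← htf, hF.sub_mul, hF.mul_sub] at hlie
  rw [hF.add_left, hF.inv_two_smul_mul, hF.add_left]
  linear_combination (norm := module) hcov - hlie

/-- **Lemma 4.7.** For an F-manifold `(M, ∘, e)` with eventual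
identity `ε` and compatible torsion-free connection `∇̃`, for every vector
field `X`:
`∇̃_{ε⁻¹∘X}(ε) = −ε∘∇̃_X(ε⁻¹) + ((1/2)(∇̃_{ε⁻¹}(ε) + ∇̃_ε(ε⁻¹)) + ∇̃_e(e))∘X`. -/
theorem statement3 {R V : Type*} [CommRing R] [LieRing V] [Module R V] [Module ℚ V]
    (S : SmoothSetting R V) (m : V → V → V) (e ε εinv : V)
    (hF : IsFManifold R m e) (hev : IsEventualIdentity R m e ε εinv)
    (nt : V → V → V) (hc : IsConnection S nt) (htf : IsTorsionFree nt)
    (hcm : IsCompatible nt m) :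
    ∀ X : V, nt (m εinv X) ε =
      - m ε (nt X εinv) +
        m ((2 : ℚ)⁻¹ • (nt εinv ε + nt ε εinv) + nt e e) X :=
  statement3_general m e ε εinv hF hev nt htf hcm
end

section
/- Let (M, ∘, e) be an F-manifold with an eventual identity ε and a compatible, torsion-free connection ∇̃, and let X * Y := X ∘ Y ∘ ε^{-1}. The torsion-free connections compatible with * which are of the form ∇_X(Y) = ε ∘ ∇̃_X(ε^{-1}∘Y) + A(Y)∘X for some section A of End(TM) are exactly the connections ∇^W_X(Y) := ε ∘ ∇̃_X(ε^{-1} ∘ Y) − ∇̃_{ε^{-1}∘Y}(ε) ∘ X + W * X * Y, where W is an arbitrary vector field. -/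
/-!
Under `∘` the vector fields form a commutative ring, so every step is a ring identity in the atoms
`∇̃_X Y` and `[X, Y]`, combined from torsion-freeness and total symmetry of `∇̃(∘)`, the
Hertling–Manin condition, and the relation `L_ε(∘)(X, Y) = [e, ε]∘X∘Y` (the Hertling–Manin
condition of `*` at `X = Y = ε` says `L_ε(*) = 0`). Written through `∇̃(∘)`, the Hertling–Manin
condition makes `∇̃_{u∘a}(∘)(b, c) − a∘∇̃_u(∘)(b, c)` symmetric in `a, b`; with `u = ε` this is
what makes `∇^F_X(Y) = ε∘∇̃_X(ε⁻¹∘Y) − ∇̃_{ε⁻¹∘Y}(ε)∘X` compatible with `*`, and `∇^F` is also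
torsion-free. Adding `W*X*Y` preserves both properties. Conversely, if
`ε∘∇̃_X(ε⁻¹∘Y) + A(Y)∘X` is torsion-free, comparing it with `∇^F` shows that
`B(Y) = A(Y) + ∇̃_{ε⁻¹∘Y}(ε)` satisfies `B(Y)∘X = B(X)∘Y`, so `B(Y) = B(e)∘Y`, which is the
term `W*X*Y` for `W = B(e)∘ε∘ε`.
-/

section

variable {R V : Type*} [CommRing R] [LieRing V] [Module R V]

namespace IsFManifold

variable {m : V → V → V} {e : V}

theorem zero_left (hF : IsFManifold R m e) (a : V) : m 0 a = 0 := by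
  simpa using hF.smul_left (0 : R) 0 a

/-- The additive group is that of `V` itself, so `ring` and `linear_combination` can combine
identities for `∘` with torsion and Lie bracket identities. -/
abbrev toCommRing (hF : IsFManifold R m e) : CommRing V :=
  { (inferInstance : AddCommGroup V) with
    mul := m
    one := e
    left_distrib := fun a b c => by
      show m a (b + c) = m a b + m a c
      rw [hF.comm a, hF.add_left, hF.comm b, hF.comm c]
    right_distrib := hF.add_left
    zero_mul := hF.zero_left
    mul_zero := fun a => by
      show m a 0 = 0
      rw [hF.comm, hF.zero_left]
    mul_assoc := hF.assoc
    one_mul := hF.unit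
    mul_one := fun a => by
      show m a e = a
      rw [hF.comm, hF.unit]
    mul_comm := hF.comm }

def mulLeft (hF : IsFManifold R m e) (a : V) : V →ₗ[R] V where
  toFun := m a
  map_add' X Y := by rw [hF.comm, hF.add_left, hF.comm X, hF.comm Y]
  map_smul' f X := by rw [hF.comm, hF.smul_left, hF.comm]; rfl

theorem lie_unit_mul (hF : IsFManifold R m e) (a b : V) :
    ⁅e, m a b⁆ = m ⁅e, a⁆ b + m a ⁅e, b⁆ := by
  have h := hF.hertling_manin e e a b
  rw [hF.unit, hF.unit, left_eq_add] at h
  rw [← sub_eq_zero, sub_add_eq_sub_sub, h]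

end IsFManifold

def IsConnection.applyTo {S : SmoothSetting R V} {nabla : V → V → V} (hc : IsConnection S nabla)
    (Z : V) : V →ₗ[R] V where
  toFun X := nabla X Z
  map_add' X Y := hc.add_left X Y Z
  map_smul' f X := hc.smul_left f X Z

section Connection

variable {m nt : V → V → V} {e : V}

theorem IsCompatible.mul_nabla_unit_comm (hF : IsFManifold R m e) (hcm : IsCompatible nt m)
    (a b : V) : m (nt a e) b = m (nt b e) a := by
  have h := ((hcm a e b).1.trans (hcm e a b).2).trans (hcm b e a).1.symm
  simp only [covMul, hF.unit] at h
  simpa using h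

theorem IsFManifold.covMul_hertling_manin (hF : IsFManifold R m e) (htf : IsTorsionFree nt)
    (a b c d : V) :
    covMul nt m (m a b) c d - covMul nt m (m c d) a b =
      m a (covMul nt m b c d) + m b (covMul nt m a c d)
        - m c (covMul nt m d a b) - m d (covMul nt m c a b) := by
  let _ := hF.toCommRing
  have hm : ∀ a b, m a b = a * b := fun _ _ => rfl
  have hHM := hF.hertling_manin a b c d
  simp only [covMul, hm] at hHM ⊢
  linear_combination hHM + htf (a*b) (c*d) - d*htf (a*b) c - c*htf (a*b) d
      - a*htf b (c*d) + (a*d)*htf b c + (a*c)*htf b d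
      - b*htf a (c*d) + (b*d)*htf a c + (b*c)*htf a d

theorem IsFManifold.covMul_mul_left_sub_comm (hF : IsFManifold R m e) (htf : IsTorsionFree nt)
    (hcm : IsCompatible nt m) (u a b c : V) :
    covMul nt m (m u a) b c - m a (covMul nt m u b c) =
      covMul nt m (m u b) a c - m b (covMul nt m u a c) := by
  let _ := hF.toCommRing
  have hm : ∀ a b, m a b = a * b := fun _ _ => rfl
  have hT1 : ∀ x y z : V, _ := fun x y z => (hcm x y z).1
  have hT2 : ∀ x y z : V, _ := fun x y z => (hcm x y z).2
  have hHM : ∀ x y z w : V, _ := fun x y z w => hF.covMul_hertling_manin htf x y z w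
  simp only [covMul, hm] at hT1 hT2 hHM ⊢
  have hb1 := hT1 (b*c) u a
  rw [show (b*c)*a = (a*c)*b by ring] at hb1
  linear_combination hHM u a b c - hHM u b a c + u*hT1 a b c
      - c*hT1 b u a + c*hT1 a u b - c*hT2 u b a
      - b*hT1 c u a - b*hT2 u c a + a*hT1 c u b + a*hT2 u c b
      + hb1 - hT1 (a*c) u b

end Connection

section EventualIdentity

variable {m nt : V → V → V} {e ε εinv : V}

theorem IsEventualIdentity.lie_mul (hF : IsFManifold R m e) (hev : IsEventualIdentity R m e ε εinv)
    (a b : V) : ⁅ε, m a b⁆ - m ⁅ε, a⁆ b - m a ⁅ε, b⁆ = m (m ⁅e, ε⁆ a) b := by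
  let _ := hF.toCommRing
  have hm : ∀ a b, m a b = a * b := fun _ _ => rfl
  have h1 : ε * εinv = 1 := hev.1
  have hL : ∀ x y : V, _ := fun x y => hev.2.lie_unit_mul x y
  simp only [dualMul, hm] at hL ⊢
  have i1 := hL a (b*ε)
  rw [show (a*(b*ε))*εinv = a*b by linear_combination (a*b)*h1] at i1
  have i2 := hL 1 (b*ε)
  rw [show ((1:V)*(b*ε))*εinv = b by linear_combination b*h1] at i2
  linear_combination i1 - a*i2 + (b*⁅ε, a⁆ - a*b*⁅ε, (1:V)⁆)*h1 + (a*b)*(lie_skew (1:V) ε)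

theorem IsEventualIdentity.covMul_eq (hF : IsFManifold R m e)
    (hev : IsEventualIdentity R m e ε εinv) (htf : IsTorsionFree nt) (a b : V) :
    covMul nt m ε a b = m (m ⁅e, ε⁆ a) b + nt (m a b) ε - m (nt a ε) b - m a (nt b ε) := by
  let _ := hF.toCommRing
  have hm : ∀ a b, m a b = a * b := fun _ _ => rfl
  have hE := hev.lie_mul hF a b
  simp only [covMul, hm] at hE ⊢
  linear_combination htf ε (a*b) - b*htf ε a - a*htf ε b + hE

theorem IsEventualIdentity.isTorsionFree_secondConn (hF : IsFManifold R m e)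
    (hev : IsEventualIdentity R m e ε εinv) (htf : IsTorsionFree nt) (hcm : IsCompatible nt m) :
    IsTorsionFree (secondConn m ε εinv nt) := by
  let _ := hF.toCommRing
  have hm : ∀ a b, m a b = a * b := fun _ _ => rfl
  have h1 : ε * εinv = 1 := hev.1
  have hT1 : ∀ x y z : V, _ := fun x y z => (hcm x y z).1
  have hT2 : ∀ x y z : V, _ := fun x y z => (hcm x y z).2
  have hE : ∀ x y : V, _ := fun x y => hev.lie_mul hF x y
  have hLe : ∀ x y : V, _ := fun x y => hcm.mul_nabla_unit_comm hF x y
  rw [← hev.1] at hLe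
  intro a b
  simp only [covMul, secondConn, hm] at hT1 hT2 hE hLe ⊢
  linear_combination ε*hT1 a εinv b - ε*hT1 b εinv a - ε*hT2 εinv b a + htf a b
      - b*htf ε (εinv*a) + a*htf ε (εinv*b) - b*hE εinv a + a*hE εinv b
      - b*hT1 a ε εinv + a*hT1 b ε εinv + (εinv*b)*htf ε a - (εinv*a)*htf ε b
      + hLe a b - b*hT2 ε a εinv + a*hT2 ε b εinv + (nt a b - nt b a)*h1

theorem IsEventualIdentity.isCompatible_secondConn (hF : IsFManifold R m e)
    (hev : IsEventualIdentity R m e ε εinv) (htf : IsTorsionFree nt) (hcm : IsCompatible nt m) :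
    IsCompatible (secondConn m ε εinv nt) (dualMul m εinv) := by
  let _ := hF.toCommRing
  have hm : ∀ a b, m a b = a * b := fun _ _ => rfl
  have h1 : ε * εinv = 1 := hev.1
  have hεcov : ∀ x y : V, _ := fun x y => hev.covMul_eq hF htf x y
  simp only [covMul, hm] at hεcov
  intro X Y Z
  simp only [covMul, secondConn, dualMul, hm]
  refine ⟨?_, by rw [mul_comm Z Y]; ring⟩
  rw [show εinv*((Y*Z)*εinv) = (εinv*Y)*(εinv*Z) by ring,
    show εinv*((X*Z)*εinv) = (εinv*X)*(εinv*Z) by ring]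
  have hsymm := hF.covMul_mul_left_sub_comm htf hcm ε (εinv*X) (εinv*Y) (εinv*Z)
  simp only [covMul, hm] at hsymm
  rw [show ε*(εinv*X) = X by linear_combination X*h1,
    show ε*(εinv*Y) = Y by linear_combination Y*h1] at hsymm
  linear_combination ε*hsymm + X*hεcov (εinv*Y) (εinv*Z) - Y*hεcov (εinv*X) (εinv*Z)
    + (-(X*Z*εinv)*nt ε (εinv*Y) + X*nt ε ((εinv*Y)*(εinv*Z))
      + (Y*Z*εinv)*nt ε (εinv*X) - Y*nt ε ((εinv*X)*(εinv*Z)))*h1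

end EventualIdentity

section AddMulMul

variable {p n : V → V → V} {u : V}

theorem IsTorsionFree.add_mul_mul (hp : IsFManifold R p u) (hn : IsTorsionFree n) (W : V) :
    IsTorsionFree fun X Y => n X Y + p (p W X) Y := by
  let _ := hp.toCommRing
  have hm : ∀ a b, p a b = a * b := fun _ _ => rfl
  intro X Y
  simp only [hm]
  linear_combination hn X Y

theorem IsCompatible.add_mul_mul (hp : IsFManifold R p u) (hn : IsCompatible n p) (W : V) :
    IsCompatible (fun X Y => n X Y + p (p W X) Y) p := by
  let _ := hp.toCommRing
  have hm : ∀ a b, p a b = a * b := fun _ _ => rfl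
  intro X Y Z
  obtain ⟨h1, h2⟩ := hn X Y Z
  simp only [covMul, hm] at h1 h2 ⊢
  exact ⟨by linear_combination h1, by linear_combination h2⟩

end AddMulMul

section DualConn

variable {m nt : V → V → V} {e ε εinv : V}

theorem IsFManifold.dualConn_apply (hF : IsFManifold R m e) (W X Y : V) :
    dualConn m ε εinv nt W X Y =
      m ε (nt X (m εinv Y)) + m (m (m (m W εinv) εinv) Y - nt (m εinv Y) ε) X := by
  let _ := hF.toCommRing
  have hm : ∀ a b, m a b = a * b := fun _ _ => rfl
  simp only [dualConn, dualMul, hm]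
  ring

theorem IsEventualIdentity.exists_dualConn_eq (hF : IsFManifold R m e)
    (hev : IsEventualIdentity R m e ε εinv) (htf : IsTorsionFree nt) (hcm : IsCompatible nt m)
    (A : V → V) (hA : IsTorsionFree fun X Y => m ε (nt X (m εinv Y)) + m (A Y) X) :
    ∃ W, (fun X Y => m ε (nt X (m εinv Y)) + m (A Y) X) = dualConn m ε εinv nt W := by
  let _ := hF.toCommRing
  have hm : ∀ a b, m a b = a * b := fun _ _ => rfl
  have h1 : ε * εinv = 1 := hev.1
  have hsym : ∀ X Y : V, (A Y + nt (εinv*Y) ε)*X = (A X + nt (εinv*X) ε)*Y := by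
    intro X Y
    have hn := hA X Y
    have h2 := hev.isTorsionFree_secondConn hF htf hcm X Y
    simp only [secondConn, hm] at hn h2
    linear_combination hn - h2
  refine ⟨(A 1 + nt (εinv*1) ε)*ε*ε, ?_⟩
  funext X Y
  simp only [dualConn, dualMul, hm]
  linear_combination X*hsym 1 Y - ((A 1 + nt (εinv*1) ε)*X*Y)*(ε*εinv+1)*h1

end DualConn

end

/-- **Corollary 4.10.** For an F-manifold `(M, ∘, e)` with
eventual identity `ε` and compatible torsion-free connection `∇̃`, the
torsion-free connections compatible with the dual multiplication `*` and of the
form `∇_X(Y) = ε∘∇̃_X(ε⁻¹∘Y) + A(Y)∘X` are exactly the connections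
`∇^W_X(Y) = ε∘∇̃_X(ε⁻¹∘Y) − ∇̃_{ε⁻¹∘Y}(ε)∘X + W*X*Y`, `W` a vector field. -/
theorem statement5 {R V : Type*} [CommRing R] [LieRing V] [Module R V]
    (S : SmoothSetting R V) (m : V → V → V) (e ε εinv : V)
    (hF : IsFManifold R m e) (hev : IsEventualIdentity R m e ε εinv)
    (nt : V → V → V) (hc : IsConnection S nt) (htf : IsTorsionFree nt)
    (hcm : IsCompatible nt m) :
    { n : V → V → V |
        (∃ A : V →ₗ[R] V, n = fun X Y => m ε (nt X (m εinv Y)) + m (A Y) X) ∧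
          IsTorsionFree n ∧ IsCompatible n (dualMul m εinv) } =
      dualFamily m ε εinv nt := by
  ext n
  constructor
  · rintro ⟨⟨A, rfl⟩, htfn, -⟩
    exact hev.exists_dualConn_eq hF htf hcm A htfn
  · rintro ⟨W, rfl⟩
    refine ⟨⟨hF.mulLeft (m (m W εinv) εinv) - (hc.applyTo ε).comp (hF.mulLeft εinv), ?_⟩,
      (hev.isTorsionFree_secondConn hF htf hcm).add_mul_mul hev.2 W,
      (hev.isCompatible_secondConn hF htf hcm).add_mul_mul hev.2 W⟩
    funext X Y
    exact hF.dualConn_apply W X Y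
end
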